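/- arXiv:2512.23088 — 6 statements merged into one kernel-verified Lean document; each statement's English description precedes it below -/
import Mathlib

section
/- Let F = (W, B, K) be an epistemic-doxastic frame and let a be an agent. Then the epistemic accessibility relation K_a coincides with the equivalence relation generated by the doxastic accessibility relation B_a, i.e., K_a = E(B_a). -/
namespace DoxHG

/-- Formulas of the epistemic-doxastic language `L_KB`. -/
inductive Form (Ag Atom : Type) : Type
  | atom : Atom → Form Ag Atom
  | neg  : Form Ag Atom → Form Ag Atom
  | and  : Form Ag Atom → Form Ag Atom → Form Ag Atom
  | B    : Ag → Form Ag Atom → Form Ag Atom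
  | K    : Ag → Form Ag Atom → Form Ag Atom

namespace Form

variable {Ag Atom : Type}

/-- φ ∨ ψ := ¬(¬φ ∧ ¬ψ) -/
def or (φ ψ : Form Ag Atom) : Form Ag Atom := .neg (.and (.neg φ) (.neg ψ))

/-- φ → ψ := ¬φ ∨ ψ -/
def imp (φ ψ : Form Ag Atom) : Form Ag Atom := Form.or (.neg φ) ψ

/-- φ ↔ ψ -/
def biimp (φ ψ : Form Ag Atom) : Form Ag Atom := .and (φ.imp ψ) (ψ.imp φ)

/-- ⊥ := p ∧ ¬p for an arbitrary but fixed propositional variable p. -/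
def bot [Inhabited Atom] : Form Ag Atom := .and (.atom default) (.neg (.atom default))

/-- Membership in the doxastic fragment `L_B` (no knowledge operators). -/
def noK : Form Ag Atom → Prop
  | .atom _  => True
  | .neg φ   => φ.noK
  | .and φ ψ => φ.noK ∧ ψ.noK
  | .B _ φ   => φ.noK
  | .K _ _   => False

/-- φ is an `a`-formula: all variables are local variables of `a` (as given by
`owner`) and all modal operators are `B a` or `K a`. -/
def isAFormula (owner : Atom → Ag) (a : Ag) : Form Ag Atom → Prop
  | .atom p  => owner p = a
  | .neg φ   => φ.isAFormula owner a
  | .and φ ψ => φ.isAFormula owner a ∧ ψ.isAFormula owner a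
  | .B b φ   => b = a ∧ φ.isAFormula owner a
  | .K b φ   => b = a ∧ φ.isAFormula owner a

end Form

/-- φ is (an instance of) a classical propositional tautology: it evaluates to
true under every boolean valuation that respects negation and conjunction
(treating atoms and modal formulas as opaque). -/
def Tautology {Ag Atom : Type} (φ : Form Ag Atom) : Prop :=
  ∀ v : Form Ag Atom → Bool,
    (∀ ψ, v (.neg ψ) = !v ψ) →
    (∀ ψ χ, v (.and ψ χ) = (v ψ && v χ)) →
    v φ = true

/-! ### Doxastic Kripke models -/

/-- A doxastic Kripke model (with set of worlds the type `W`, assumed nonempty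
where required): doxastic accessibility relations `B a` and valuation `V`. -/
structure KModel (Ag Atom W : Type) where
  B : Ag → W → W → Prop
  V : W → Set Atom

section Kripke

variable {Ag Atom W : Type}

/-- Kripke satisfaction `⊨ₖ`; `K a` is interpreted via the equivalence relation
generated by `B a` (i.e. `Relation.EqvGen`, the smallest equivalence relation
containing it). -/
def ksat (M : KModel Ag Atom W) : W → Form Ag Atom → Prop
  | w, .atom p  => p ∈ M.V w
  | w, .neg φ   => ¬ ksat M w φ
  | w, .and φ ψ => ksat M w φ ∧ ksat M w ψ
  | w, .B a φ   => ∀ u, M.B a w u → ksat M u φ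
  | w, .K a φ   => ∀ u, Relation.EqvGen (M.B a) w u → ksat M u φ

def KModel.Serial (M : KModel Ag Atom W) : Prop := ∀ (a : Ag) (w : W), ∃ u, M.B a w u

def KModel.Transit (M : KModel Ag Atom W) : Prop :=
  ∀ (a : Ag) (u v w : W), M.B a u v → M.B a v w → M.B a u w

def KModel.Eucl (M : KModel Ag Atom W) : Prop :=
  ∀ (a : Ag) (u v w : W), M.B a u v → M.B a u w → M.B a v w

/-- Locality: worlds related by `B a ∪ (B a)⁻¹` agree on the local variables of `a`. -/
def KModel.Local (owner : Atom → Ag) (M : KModel Ag Atom W) : Prop :=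
  ∀ (a : Ag) (u v : W), (M.B a u v ∨ M.B a v u) →
    M.V u ∩ {p | owner p = a} = M.V v ∩ {p | owner p = a}

/-- Properness: distinct worlds are distinguished by some agent. -/
def KModel.Proper (M : KModel Ag Atom W) : Prop :=
  ∀ u v : W, u ≠ v → ∃ a : Ag, ¬ Relation.EqvGen (M.B a) u v

end Kripke

/-! ### The Hilbert systems EDL, LocK45 and LocKD45 -/

section ProofSystems

variable {Ag Atom : Type}

/-- Provability in the Hilbert system EDL. -/
inductive EDLProv (owner : Atom → Ag) : Form Ag Atom → Prop
  | taut {φ : Form Ag Atom} : Tautology φ → EDLProv owner φ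
  | axKB (a : Ag) (φ ψ : Form Ag Atom) :
      EDLProv owner ((Form.B a (φ.imp ψ)).imp ((Form.B a φ).imp (Form.B a ψ)))
  | axDB (a : Ag) (φ : Form Ag Atom) :
      EDLProv owner (Form.neg (Form.B a (Form.and φ (Form.neg φ))))
  | ax4B (a : Ag) (φ : Form Ag Atom) :
      EDLProv owner ((Form.B a φ).imp (Form.B a (Form.B a φ)))
  | ax5B (a : Ag) (φ : Form Ag Atom) :
      EDLProv owner ((Form.neg (Form.B a φ)).imp (Form.B a (Form.neg (Form.B a φ))))
  | axKK (a : Ag) (φ ψ : Form Ag Atom) :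
      EDLProv owner ((Form.K a (φ.imp ψ)).imp ((Form.K a φ).imp (Form.K a ψ)))
  | axTK (a : Ag) (φ : Form Ag Atom) :
      EDLProv owner ((Form.K a φ).imp φ)
  | ax4K (a : Ag) (φ : Form Ag Atom) :
      EDLProv owner ((Form.K a φ).imp (Form.K a (Form.K a φ)))
  | ax5K (a : Ag) (φ : Form Ag Atom) :
      EDLProv owner ((Form.neg (Form.K a φ)).imp (Form.K a (Form.neg (Form.K a φ))))
  | axPI (a : Ag) (φ : Form Ag Atom) :
      EDLProv owner ((Form.B a φ).imp (Form.K a (Form.B a φ)))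
  | axNI (a : Ag) (φ : Form Ag Atom) :
      EDLProv owner ((Form.neg (Form.B a φ)).imp (Form.K a (Form.neg (Form.B a φ))))
  | axKIB (a : Ag) (φ : Form Ag Atom) :
      EDLProv owner ((Form.K a φ).imp (Form.B a φ))
  | axLoc (a : Ag) (p : Atom) (h : owner p = a) :
      EDLProv owner (Form.and ((Form.atom p).imp (Form.B a (Form.atom p)))
        ((Form.neg (Form.atom p)).imp (Form.B a (Form.neg (Form.atom p)))))
  | mp {φ ψ : Form Ag Atom} :
      EDLProv owner (φ.imp ψ) → EDLProv owner φ → EDLProv owner ψ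
  | nec (a : Ag) {φ : Form Ag Atom} : EDLProv owner φ → EDLProv owner (Form.K a φ)

/-- Provability in the Hilbert systems over the doxastic fragment `L_B`:
`BProv owner true` is LocKD45 (with axiom D_B) and `BProv owner false` is
LocK45 (without D_B). -/
inductive BProv (owner : Atom → Ag) (withD : Bool) : Form Ag Atom → Prop
  | taut {φ : Form Ag Atom} : φ.noK → Tautology φ → BProv owner withD φ
  | axKB (a : Ag) {φ ψ : Form Ag Atom} (hφ : φ.noK) (hψ : ψ.noK) :
      BProv owner withD ((Form.B a (φ.imp ψ)).imp ((Form.B a φ).imp (Form.B a ψ)))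
  | axDB (a : Ag) {φ : Form Ag Atom} (hD : withD = true) (hφ : φ.noK) :
      BProv owner withD (Form.neg (Form.B a (Form.and φ (Form.neg φ))))
  | ax4B (a : Ag) {φ : Form Ag Atom} (hφ : φ.noK) :
      BProv owner withD ((Form.B a φ).imp (Form.B a (Form.B a φ)))
  | ax5B (a : Ag) {φ : Form Ag Atom} (hφ : φ.noK) :
      BProv owner withD ((Form.neg (Form.B a φ)).imp (Form.B a (Form.neg (Form.B a φ))))
  | axLoc (a : Ag) (p : Atom) (h : owner p = a) :
      BProv owner withD (Form.and ((Form.atom p).imp (Form.B a (Form.atom p)))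
        ((Form.neg (Form.atom p)).imp (Form.B a (Form.neg (Form.atom p)))))
  | mp {φ ψ : Form Ag Atom} :
      BProv owner withD (φ.imp ψ) → BProv owner withD φ → BProv owner withD ψ
  | nec (a : Ag) {φ : Form Ag Atom} : BProv owner withD φ → BProv owner withD (Form.B a φ)

/-- Conjunction of a finite list of formulas (the empty conjunction is ¬⊥). -/
def conj [Inhabited Atom] : List (Form Ag Atom) → Form Ag Atom
  | []        => Form.neg Form.bot
  | [φ]       => φ
  | φ :: rest => Form.and φ (conj rest)

/-- Γ ⊢ φ in EDL: some finite subset Δ ⊆ Γ has EDL ⊢ (⋀Δ) → φ. -/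
def ProvFrom [Inhabited Atom] (owner : Atom → Ag) (Γ : Set (Form Ag Atom))
    (φ : Form Ag Atom) : Prop :=
  ∃ L : List (Form Ag Atom), (∀ ψ ∈ L, ψ ∈ Γ) ∧ EDLProv owner ((conj L).imp φ)

/-- Γ is EDL-consistent. -/
def EDLConsistent [Inhabited Atom] (owner : Atom → Ag) (Γ : Set (Form Ag Atom)) : Prop :=
  ¬ ProvFrom owner Γ Form.bot

/-- Γ is maximally EDL-consistent. -/
def MaxEDLConsistent [Inhabited Atom] (owner : Atom → Ag) (Γ : Set (Form Ag Atom)) : Prop :=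
  EDLConsistent owner Γ ∧ ∀ Δ : Set (Form Ag Atom), Γ ⊂ Δ → ¬ EDLConsistent owner Δ

end ProofSystems

/-! ### Directed hypergraph models -/

/-- The undirected hyperedge `ē = T(e) ∪ H(e)` induced by a directed hyperedge
`e = (T(e), H(e))`. -/
def ebar {V : Type} (e : Set V × Set V) : Set V := e.1 ∪ e.2

/-- A (directed) hypergraph model: a vertex set, a set of directed hyperedges
(pairs (tail, head)), a coloring and a valuation.  Well-formedness conditions
are stated separately. -/
structure HModel (Ag Atom V : Type) where
  Vset : Set V
  E : Set (Set V × Set V)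
  χ : V → Ag
  ℓ : V → Set Atom

namespace HModel

variable {Ag Atom V : Type}

/-- `(Vset, E)` is a directed hypergraph: the vertex set is nonempty and every
hyperedge consists of a finite tail and a finite head, disjoint from each
other, both made of vertices. -/
def IsHypergraph (M : HModel Ag Atom V) : Prop :=
  M.Vset.Nonempty ∧
    ∀ e ∈ M.E, e.1 ⊆ M.Vset ∧ e.2 ⊆ M.Vset ∧ e.1.Finite ∧ e.2.Finite ∧ Disjoint e.1 e.2

/-- χ is a coloring: distinct vertices of the same hyperedge get distinct colors. -/
def IsChromatic (M : HModel Ag Atom V) : Prop :=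
  ∀ e ∈ M.E, Set.InjOn M.χ (ebar e)

/-- The valuation assigns to an `a`-colored vertex only local variables of `a`. -/
def ValOk (owner : Atom → Ag) (M : HModel Ag Atom V) : Prop :=
  ∀ v ∈ M.Vset, M.ℓ v ⊆ {p | owner p = M.χ v}

/-- M is a (well-formed, chromatic) hypergraph model. -/
def IsModel (owner : Atom → Ag) (M : HModel Ag Atom V) : Prop :=
  M.IsHypergraph ∧ M.IsChromatic ∧ M.ValOk owner

/-- Simplicity: for distinct hyperedges, `ē₁ ⊄ ē₂`. -/
def Simple (M : HModel Ag Atom V) : Prop :=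
  ∀ e₁ ∈ M.E, ∀ e₂ ∈ M.E, e₁ ≠ e₂ → ¬ ebar e₁ ⊆ ebar e₂

/-- n-uniformity: every hyperedge has exactly `n` vertices. -/
def Uniform (M : HModel Ag Atom V) (n : ℕ) : Prop :=
  ∀ e ∈ M.E, (ebar e).ncard = n

/-- Tail-completeness: every vertex lies in the tail of some hyperedge. -/
def TailComplete (M : HModel Ag Atom V) : Prop :=
  ∀ v ∈ M.Vset, ∃ e ∈ M.E, v ∈ e.1

end HModel

section HSemantics

variable {Ag Atom V : Type}

/-- The doxastic accessibility relation `B^G_a` between hyperedges: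
some `a`-colored vertex lies in `ē₁ ∩ T(e₂)`. -/
def Bacc (M : HModel Ag Atom V) (a : Ag) (e₁ e₂ : Set V × Set V) : Prop :=
  ∃ u : V, M.χ u = a ∧ u ∈ ebar e₁ ∧ u ∈ e₂.1

/-- The epistemic accessibility relation `K^G_a` between hyperedges:
some `a`-colored vertex lies in `ē₁ ∩ ē₂`. -/
def Kacc (M : HModel Ag Atom V) (a : Ag) (e₁ e₂ : Set V × Set V) : Prop :=
  ∃ u : V, M.χ u = a ∧ u ∈ ebar e₁ ∧ u ∈ ebar e₂

/-- `ℓ(e) = ⋃_{u ∈ ē} ℓ(u)`. -/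
def elabel (M : HModel Ag Atom V) (e : Set V × Set V) : Set Atom :=
  ⋃ u ∈ ebar e, M.ℓ u

/-- Hypergraph satisfaction `⊨ₕ`. -/
def hsat (M : HModel Ag Atom V) : Set V × Set V → Form Ag Atom → Prop
  | e, .atom p  => p ∈ elabel M e
  | e, .neg φ   => ¬ hsat M e φ
  | e, .and φ ψ => hsat M e φ ∧ hsat M e ψ
  | e, .B a φ   => ∀ e' ∈ M.E, Bacc M a e e' → hsat M e' φ
  | e, .K a φ   => ∀ e' ∈ M.E, Kacc M a e e' → hsat M e' φ

end HSemantics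

end DoxHG

namespace DoxHG

/-- In an epistemic-doxastic frame (each `B a` serial, transitive
and Euclidean, each `K a` an equivalence relation satisfying C1–C3), the
epistemic relation `K a` coincides with the equivalence relation generated by
the doxastic relation `B a`. -/
theorem statement_0 {Ag W : Type} [Fintype Ag] [Nonempty Ag] [Nonempty W]
    (B K : Ag → W → W → Prop)
    (hSer : ∀ (a : Ag) (u : W), ∃ v, B a u v)
    (hTrans : ∀ (a : Ag) (u v w : W), B a u v → B a v w → B a u w)
    (hEucl : ∀ (a : Ag) (u v w : W), B a u v → B a u w → B a v w)
    (hEquiv : ∀ a : Ag, Equivalence (K a))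
    (hC1 : ∀ (a : Ag) (u v : W), B a u v → K a u v)
    (hC2 : ∀ (a : Ag) (u v w : W), K a u v → B a v w → B a u w)
    (hC3 : ∀ (a : Ag) (u v w : W), K a u v → B a u w → B a v w)
    (a : Ag) :
    ∀ u v : W, K a u v ↔ Relation.EqvGen (B a) u v := by
  intro u v
  constructor
  · intro h
    obtain ⟨w, hw⟩ := hSer a u
    exact (Relation.EqvGen.rel _ _ hw).trans _ _ _
      ((Relation.EqvGen.rel _ _ (hC3 a u v w h hw)).symm _ _)
  · intro h
    induction h with
    | rel x y hxy => exact hC1 a x y hxy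
    | refl x => exact (hEquiv a).refl x
    | symm x y _ ih => exact (hEquiv a).symm ih
    | trans x y z _ _ ih1 ih2 => exact (hEquiv a).trans ih1 ih2

end DoxHG
end

section
/- Let M be a local doxastic Kripke model that is transitive and Euclidean, let a be an agent, and let φ be an a-formula. Then φ → B_aφ is valid in M, i.e., M,w ⊨_k φ → B_aφ for every world w of M. -/
namespace DoxHG

lemma key {Ag Atom W : Type} (owner : Atom → Ag) (M : KModel Ag Atom W)
    (hLoc : M.Local owner) (hTrans : M.Transit) (hEucl : M.Eucl)
    (a : Ag) :
    ∀ (φ : Form Ag Atom), φ.isAFormula owner a →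
      ∀ w u, M.B a w u → (ksat M w φ ↔ ksat M u φ) := by
  intro φ
  induction φ with
  | atom p =>
    intro hφ w u h
    have := hLoc a w u (Or.inl h)
    simp only [ksat]
    constructor <;> intro hp
    · have : p ∈ M.V w ∩ {q | owner q = a} := ⟨hp, hφ⟩
      rw [hLoc a w u (Or.inl h)] at this; exact this.1
    · have : p ∈ M.V u ∩ {q | owner q = a} := ⟨hp, hφ⟩
      rw [← hLoc a w u (Or.inl h)] at this; exact this.1
  | neg φ ih =>
    intro hφ w u h
    simp only [ksat]; exact not_congr (ih hφ w u h)
  | and φ ψ ihφ ihψ =>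
    intro hφ w u h
    simp only [ksat]; exact and_congr (ihφ hφ.1 w u h) (ihψ hφ.2 w u h)
  | B b φ ih =>
    intro hφ w u h
    obtain ⟨rfl, hφ'⟩ := hφ
    simp only [ksat]
    constructor
    · intro hw v huv
      exact hw v (hTrans b w u v h huv)
    · intro hu v hwv
      exact hu v (hEucl b w u v h hwv)
  | K b φ ih =>
    intro hφ w u h
    obtain ⟨rfl, hφ'⟩ := hφ
    simp only [ksat]
    constructor
    · intro hw v huv
      exact hw v (Relation.EqvGen.trans _ _ _ (Relation.EqvGen.rel _ _ h) huv)
    · intro hu v hwv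
      exact hu v (Relation.EqvGen.trans _ _ _
        (Relation.EqvGen.symm _ _ (Relation.EqvGen.rel _ _ h)) hwv)

/-- In a local, transitive and Euclidean doxastic Kripke model,
`φ → B_aφ` is valid for every `a`-formula `φ`. -/
theorem statement_1 {Ag Atom W : Type} [Fintype Ag] [Nonempty Ag] [Countable Atom] [Nonempty W]
    (owner : Atom → Ag) (M : KModel Ag Atom W)
    (hLoc : M.Local owner) (hTrans : M.Transit) (hEucl : M.Eucl)
    (a : Ag) (φ : Form Ag Atom) (hφ : φ.isAFormula owner a) (w : W) :
    ksat M w (φ.imp (Form.B a φ)) := by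
  simp only [Form.imp, Form.or, ksat, not_and, not_not]
  intro h u hwu
  exact (key owner M hLoc hTrans hEucl a φ hφ w u hwu).mp h

end DoxHG
end

section
/- Let M be a local doxastic Kripke model that is serial, transitive and Euclidean, let a be an agent, and let φ be an a-formula. Then φ ↔ B_aφ is valid in M, i.e., M,w ⊨_k φ ↔ B_aφ for every world w of M. -/
namespace DoxHG

/-- Key lemma: along a `B a` edge, `a`-formulas keep their truth value. -/
lemma step_invariance {Ag Atom W : Type}
    (owner : Atom → Ag) (M : KModel Ag Atom W)
    (hLoc : M.Local owner) (hTrans : M.Transit) (hEucl : M.Eucl) (a : Ag) :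
    ∀ (φ : Form Ag Atom), φ.isAFormula owner a →
      ∀ w u : W, M.B a w u → (ksat M w φ ↔ ksat M u φ) := by
  intro φ
  induction φ with
  | atom p =>
    intro hp w u hwu
    have h := hLoc a w u (Or.inl hwu)
    have := Set.ext_iff.mp h p
    simp only [Set.mem_inter_iff, Set.mem_setOf_eq] at this
    simp only [ksat]
    constructor <;> intro hmem
    · exact (this.mp ⟨hmem, hp⟩).1
    · exact (this.mpr ⟨hmem, hp⟩).1
  | neg φ ih =>
    intro hφ w u hwu
    simp only [ksat]
    exact not_congr (ih hφ w u hwu)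
  | and φ ψ ihφ ihψ =>
    intro hφ w u hwu
    simp only [ksat]
    exact and_congr (ihφ hφ.1 w u hwu) (ihψ hφ.2 w u hwu)
  | B b φ ih =>
    intro hφ w u hwu
    obtain ⟨rfl, hφ⟩ := hφ
    simp only [ksat]
    constructor
    · intro h v huv
      exact h v (hTrans b w u v hwu huv)
    · intro h v hwv
      exact h v (hEucl b w u v hwu hwv)
  | K b φ ih =>
    intro hφ w u hwu
    obtain ⟨rfl, hφ⟩ := hφ
    have hwu' : Relation.EqvGen (M.B b) w u := Relation.EqvGen.rel _ _ hwu
    simp only [ksat]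
    constructor
    · intro h v huv
      exact h v (hwu'.trans _ _ _ huv)
    · intro h v hwv
      exact h v (((hwu'.symm _ _).trans _ _ _) hwv)

/-- In a local, serial, transitive and Euclidean doxastic Kripke
model, `φ ↔ B_aφ` is valid for every `a`-formula `φ`. -/
theorem statement_2 {Ag Atom W : Type} [Fintype Ag] [Nonempty Ag] [Countable Atom] [Nonempty W]
    (owner : Atom → Ag) (M : KModel Ag Atom W)
    (hLoc : M.Local owner) (hSer : M.Serial) (hTrans : M.Transit) (hEucl : M.Eucl)
    (a : Ag) (φ : Form Ag Atom) (hφ : φ.isAFormula owner a) (w : W) :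
    ksat M w (φ.biimp (Form.B a φ)) := by
  have key := step_invariance owner M hLoc hTrans hEucl a φ hφ
  have h1 : ksat M w φ ↔ ksat M w (Form.B a φ) := by
    constructor
    · intro h u hwu
      exact (key w u hwu).mp h
    · intro h
      obtain ⟨u, hwu⟩ := hSer a w
      exact (key w u hwu).mpr (h u hwu)
  simp only [Form.biimp, Form.imp, Form.or, ksat]
  tauto

end DoxHG
end

section
/- The proof system EDL is sound and complete with respect to the class K^{STE}_n of all local and proper doxastic Kripke models that are serial, transitive and Euclidean: for every formula φ ∈ L_KB, EDL ⊢ φ if and only if M,w ⊨_k φ for every model M ∈ K^{STE}_n and every world w of M. -/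
namespace DoxHG

section Taut
variable {Ag Atom : Type}

lemma eval_imp (v : Form Ag Atom → Bool) (hn : ∀ ψ, v (.neg ψ) = !v ψ)
    (ha : ∀ ψ χ, v (.and ψ χ) = (v ψ && v χ)) (φ ψ : Form Ag Atom) :
    v (φ.imp ψ) = (!v φ || v ψ) := by
  simp [Form.imp, Form.or, hn, ha]

lemma eval_bot [Inhabited Atom] (v : Form Ag Atom → Bool) (hn : ∀ ψ, v (.neg ψ) = !v ψ)
    (ha : ∀ ψ χ, v (.and ψ χ) = (v ψ && v χ)) :
    v Form.bot = false := by
  simp [Form.bot, hn, ha]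

lemma taut_id (φ : Form Ag Atom) : Tautology (φ.imp φ) := by
  intro v hn ha; rw [eval_imp v hn ha]; cases v φ <;> simp

lemma taut_S (φ ψ χ : Form Ag Atom) :
    Tautology ((φ.imp (ψ.imp χ)).imp ((φ.imp ψ).imp (φ.imp χ))) := by
  intro v hn ha; simp only [eval_imp v hn ha]
  cases v φ <;> cases v ψ <;> cases v χ <;> simp

lemma taut_trans (φ ψ χ : Form Ag Atom) :
    Tautology ((φ.imp ψ).imp ((ψ.imp χ).imp (φ.imp χ))) := by
  intro v hn ha; simp only [eval_imp v hn ha]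
  cases v φ <;> cases v ψ <;> cases v χ <;> simp

lemma taut_and_left (φ ψ : Form Ag Atom) : Tautology ((φ.and ψ).imp φ) := by
  intro v hn ha; simp only [eval_imp v hn ha, ha]
  cases v φ <;> cases v ψ <;> simp

lemma taut_and_right (φ ψ : Form Ag Atom) : Tautology ((φ.and ψ).imp ψ) := by
  intro v hn ha; simp only [eval_imp v hn ha, ha]
  cases v φ <;> cases v ψ <;> simp

lemma taut_and_intro (φ ψ : Form Ag Atom) : Tautology (φ.imp (ψ.imp (φ.and ψ))) := by
  intro v hn ha; simp only [eval_imp v hn ha, ha]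
  cases v φ <;> cases v ψ <;> simp

lemma taut_imp_and (φ ψ χ : Form Ag Atom) :
    Tautology ((χ.imp φ).imp ((χ.imp ψ).imp (χ.imp (φ.and ψ)))) := by
  intro v hn ha; simp only [eval_imp v hn ha, ha]
  cases v φ <;> cases v ψ <;> cases v χ <;> simp

lemma taut_export (φ ψ χ : Form Ag Atom) :
    Tautology (((φ.and ψ).imp χ).imp (ψ.imp (φ.imp χ))) := by
  intro v hn ha; simp only [eval_imp v hn ha, ha]
  cases v φ <;> cases v ψ <;> cases v χ <;> simp

lemma taut_notbot [Inhabited Atom] : Tautology (Form.neg (Form.bot (Ag := Ag) (Atom := Atom))) := by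
  intro v hn ha; rw [hn, eval_bot v hn ha]; rfl

lemma taut_imp_notbot [Inhabited Atom] (φ : Form Ag Atom) : Tautology (φ.imp (Form.neg Form.bot)) := by
  intro v hn ha; rw [eval_imp v hn ha, hn, eval_bot v hn ha]; cases v φ <;> simp

lemma taut_bot_imp [Inhabited Atom] (φ : Form Ag Atom) : Tautology ((Form.bot).imp φ) := by
  intro v hn ha; rw [eval_imp v hn ha, eval_bot v hn ha]; simp

lemma taut_contr [Inhabited Atom] (φ : Form Ag Atom) :
    Tautology (φ.imp ((Form.neg φ).imp Form.bot)) := by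
  intro v hn ha; simp only [eval_imp v hn ha, hn, eval_bot v hn ha]
  cases v φ <;> simp

lemma taut_imp_bot_neg [Inhabited Atom] (φ : Form Ag Atom) :
    Tautology ((φ.imp Form.bot).imp (Form.neg φ)) := by
  intro v hn ha; simp only [eval_imp v hn ha, hn, eval_bot v hn ha]
  cases v φ <;> simp

lemma taut_negimp_bot_pos [Inhabited Atom] (φ : Form Ag Atom) :
    Tautology (((Form.neg φ).imp Form.bot).imp φ) := by
  intro v hn ha; simp only [eval_imp v hn ha, hn, eval_bot v hn ha]
  cases v φ <;> simp

lemma taut_K (φ ψ : Form Ag Atom) : Tautology (φ.imp (ψ.imp φ)) := by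
  intro v hn ha; simp only [eval_imp v hn ha]
  cases v φ <;> cases v ψ <;> simp

end Taut

section AuxEDL
variable {Ag Atom : Type} {owner : Atom → Ag}

lemma EDLProv.imp_trans {φ ψ χ : Form Ag Atom} (h1 : EDLProv owner (φ.imp ψ))
    (h2 : EDLProv owner (ψ.imp χ)) : EDLProv owner (φ.imp χ) :=
  .mp (.mp (.taut (taut_trans φ ψ χ)) h1) h2

lemma EDLProv.necB (a : Ag) {φ : Form Ag Atom} (h : EDLProv owner φ) :
    EDLProv owner (Form.B a φ) :=
  .mp (.axKIB a φ) (.nec a h)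

lemma EDLProv.distB (a : Ag) {φ ψ : Form Ag Atom} (h : EDLProv owner (φ.imp ψ)) :
    EDLProv owner ((Form.B a φ).imp (Form.B a ψ)) :=
  .mp (.axKB a φ ψ) (.necB a h)

lemma EDLProv.distK (a : Ag) {φ ψ : Form Ag Atom} (h : EDLProv owner (φ.imp ψ)) :
    EDLProv owner ((Form.K a φ).imp (Form.K a ψ)) :=
  .mp (.axKK a φ ψ) (.nec a h)

lemma EDLProv.B_and (a : Ag) (φ ψ : Form Ag Atom) :
    EDLProv owner ((Form.B a φ).imp ((Form.B a ψ).imp (Form.B a (φ.and ψ)))) :=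
  (EDLProv.distB a (.taut (taut_and_intro φ ψ))).imp_trans (.axKB a ψ (φ.and ψ))

lemma EDLProv.K_and (a : Ag) (φ ψ : Form Ag Atom) :
    EDLProv owner ((Form.K a φ).imp ((Form.K a ψ).imp (Form.K a (φ.and ψ)))) :=
  (EDLProv.distK a (.taut (taut_and_intro φ ψ))).imp_trans (.axKK a ψ (φ.and ψ))



section AuxProvFrom
variable {Γ' : Set (Form Ag Atom)}
variable [Inhabited Atom]

lemma conj_imp_mem {L : List (Form Ag Atom)} {ψ : Form Ag Atom} (h : ψ ∈ L) :
    EDLProv owner ((conj L).imp ψ) := by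
  induction L with
  | nil => simp at h
  | cons φ rest ih =>
    rcases List.mem_cons.1 h with rfl | h
    · cases rest with
      | nil => exact .taut (taut_id _)
      | cons χ t => exact .taut (taut_and_left _ _)
    · cases rest with
      | nil => simp at h
      | cons χ t =>
        exact (EDLProv.taut (taut_and_right φ (conj (χ :: t)))).imp_trans (ih h)

lemma imp_conj {χ : Form Ag Atom} {L : List (Form Ag Atom)}
    (h : ∀ ψ ∈ L, EDLProv owner (χ.imp ψ)) : EDLProv owner (χ.imp (conj L)) := by
  induction L with
  | nil => exact .taut (taut_imp_notbot χ)
  | cons φ rest ih =>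
    cases rest with
    | nil => exact h φ (by simp)
    | cons ψ t =>
      exact .mp (.mp (.taut (taut_imp_and φ (conj (ψ :: t)) χ)) (h φ (by simp)))
        (ih (fun ψ' h' => h ψ' (by simp [h'])))

lemma ProvFrom.of_prov {Γ : Set (Form Ag Atom)} {φ : Form Ag Atom}
    (h : EDLProv owner φ) : ProvFrom owner Γ φ :=
  ⟨[], by simp, .mp (.taut (taut_K φ _)) h⟩

lemma ProvFrom.of_mem {Γ : Set (Form Ag Atom)} {φ : Form Ag Atom}
    (h : φ ∈ Γ) : ProvFrom owner Γ φ :=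
  ⟨[φ], by simpa using h, .taut (taut_id φ)⟩

lemma ProvFrom.mp' {Γ : Set (Form Ag Atom)} {φ ψ : Form Ag Atom}
    (h1 : ProvFrom owner Γ (φ.imp ψ)) (h2 : ProvFrom owner Γ φ) :
    ProvFrom owner Γ ψ := by
  obtain ⟨L1, hL1, p1⟩ := h1; obtain ⟨L2, hL2, p2⟩ := h2
  refine ⟨L1 ++ L2, ?_, ?_⟩
  · intro χ hχ; rcases List.mem_append.1 hχ with h | h
    exacts [hL1 _ h, hL2 _ h]
  · have a1 : EDLProv owner ((conj (L1 ++ L2)).imp (conj L1)) :=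
      imp_conj (fun χ hχ => conj_imp_mem (by simp [hχ]))
    have a2 : EDLProv owner ((conj (L1 ++ L2)).imp (conj L2)) :=
      imp_conj (fun χ hχ => conj_imp_mem (by simp [hχ]))
    exact .mp (.mp (.taut (taut_S (conj (L1 ++ L2)) φ ψ)) (a1.imp_trans p1))
      (a2.imp_trans p2)

lemma deduction {Γ : Set (Form Ag Atom)} {φ ψ : Form Ag Atom}
    (h : ProvFrom owner (insert φ Γ) ψ) : ProvFrom owner Γ (φ.imp ψ) := by
  classical
  obtain ⟨L, hL, p⟩ := h
  refine ⟨L.filter (fun χ => decide (χ ≠ φ)), ?_, ?_⟩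
  · intro χ hχ
    obtain ⟨h1, h2⟩ := List.mem_filter.1 hχ
    rcases hL χ h1 with h3 | h3
    · exact absurd h3 (by simpa using h2)
    · exact h3
  · have key : EDLProv owner
        ((Form.and φ (conj (L.filter (fun χ => decide (χ ≠ φ))))).imp (conj L)) := by
      refine imp_conj (fun χ hχ => ?_)
      by_cases hc : χ = φ
      · subst hc; exact .taut (taut_and_left _ _)
      · exact (EDLProv.taut (taut_and_right φ _)).imp_trans
          (conj_imp_mem (List.mem_filter.2 ⟨hχ, by simp [hc]⟩))
    exact .mp (.taut (taut_export φ _ ψ)) (key.imp_trans p)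

variable {Γ : Set (Form Ag Atom)}

lemma MaxEDLConsistent.mem_of_prov (h : MaxEDLConsistent owner Γ) {φ : Form Ag Atom}
    (hp : ProvFrom owner Γ φ) : φ ∈ Γ := by
  by_contra hne
  have hsub : Γ ⊂ insert φ Γ := Set.ssubset_insert hne
  have hinc := h.2 _ hsub
  rw [EDLConsistent, not_not] at hinc
  have := (deduction hinc).mp' hp
  exact h.1 this

lemma MaxEDLConsistent.mem_of_EDLProv (h : MaxEDLConsistent owner Γ) {φ : Form Ag Atom}
    (hp : EDLProv owner φ) : φ ∈ Γ :=
  h.mem_of_prov (.of_prov hp)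

lemma MaxEDLConsistent.imp_closed (h : MaxEDLConsistent owner Γ) {φ ψ : Form Ag Atom}
    (h1 : φ.imp ψ ∈ Γ) (h2 : φ ∈ Γ) : ψ ∈ Γ :=
  h.mem_of_prov ((ProvFrom.of_mem h1).mp' (.of_mem h2))

lemma MaxEDLConsistent.neg_mem_iff (h : MaxEDLConsistent owner Γ) {φ : Form Ag Atom} :
    Form.neg φ ∈ Γ ↔ φ ∉ Γ := by
  constructor
  · intro hn hφ
    exact h.1 (((ProvFrom.of_prov (.taut (taut_contr φ))).mp' (.of_mem hφ)).mp' (.of_mem hn))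
  · intro hφ
    by_contra hn
    have hsub : Γ ⊂ insert φ Γ := Set.ssubset_insert hφ
    have hinc := h.2 _ hsub
    rw [EDLConsistent, not_not] at hinc
    have : ProvFrom owner Γ (Form.neg φ) :=
      (ProvFrom.of_prov (.taut (taut_imp_bot_neg φ))).mp' (deduction hinc)
    exact hn (h.mem_of_prov this)

lemma MaxEDLConsistent.and_mem_iff (h : MaxEDLConsistent owner Γ) {φ ψ : Form Ag Atom} :
    Form.and φ ψ ∈ Γ ↔ φ ∈ Γ ∧ ψ ∈ Γ := by
  constructor
  · intro hc
    exact ⟨h.mem_of_prov ((ProvFrom.of_prov (.taut (taut_and_left φ ψ))).mp' (.of_mem hc)),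
      h.mem_of_prov ((ProvFrom.of_prov (.taut (taut_and_right φ ψ))).mp' (.of_mem hc))⟩
  · rintro ⟨h1, h2⟩
    exact h.mem_of_prov (((ProvFrom.of_prov (.taut (taut_and_intro φ ψ))).mp'
      (.of_mem h1)).mp' (.of_mem h2))

lemma lindenbaum (h : EDLConsistent owner Γ) :
    ∃ Δ, Γ ⊆ Δ ∧ MaxEDLConsistent owner Δ := by
  have H : ∀ c ⊆ {Δ : Set (Form Ag Atom) | EDLConsistent owner Δ},
      IsChain (· ⊆ ·) c → c.Nonempty →
      ∃ ub ∈ {Δ : Set (Form Ag Atom) | EDLConsistent owner Δ}, ∀ s ∈ c, s ⊆ ub := by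
    intro c hcS hchain hcne
    refine ⟨⋃₀ c, ?_, fun s hs => Set.subset_sUnion_of_mem hs⟩
    rintro ⟨L, hL, p⟩
    obtain ⟨t₀, ht₀⟩ := hcne
    have key : ∀ L' : List (Form Ag Atom), (∀ ψ ∈ L', ψ ∈ ⋃₀ c) →
        ∃ t ∈ c, ∀ ψ ∈ L', ψ ∈ t := by
      intro L' hL'
      induction L' with
      | nil => exact ⟨t₀, ht₀, by simp⟩
      | cons ψ rest ih =>
        obtain ⟨t, htc, htall⟩ := ih (fun χ hχ => hL' χ (by simp [hχ]))
        obtain ⟨s, hsc, hψs⟩ := hL' ψ (by simp)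
        rcases hchain.total htc hsc with hts | hst
        · exact ⟨s, hsc, fun χ hχ => by
            rcases List.mem_cons.1 hχ with rfl | hχ
            exacts [hψs, hts (htall χ hχ)]⟩
        · exact ⟨t, htc, fun χ hχ => by
            rcases List.mem_cons.1 hχ with rfl | hχ
            exacts [hst hψs, htall χ hχ]⟩
    obtain ⟨t, htc, htall⟩ := key L hL
    exact hcS htc ⟨L, htall, p⟩
  obtain ⟨m, hm, hmax⟩ := zorn_subset_nonempty _ H Γ h
  exact ⟨m, hm, hmax.1, fun Δ hsub hcon => hsub.not_subset (hmax.2 hcon hsub.subset)⟩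


end AuxProvFrom
end AuxEDL

/-! ### Canonical model -/
section Canonical
variable {Ag Atom : Type} {owner : Atom → Ag} [Inhabited Atom]

/-- Worlds of the canonical model. -/
def CW (owner : Atom → Ag) : Type := {Γ : Set (Form Ag Atom) // MaxEDLConsistent owner Γ}

/-- The canonical model. -/
def canon (owner : Atom → Ag) [Inhabited Atom] : KModel Ag Atom (CW owner) where
  B a Γ Δ := ∀ ψ : Form Ag Atom, Form.B a ψ ∈ Γ.1 → ψ ∈ Δ.1
  V Γ := {p | Form.atom p ∈ Γ.1}

/-- The canonical knowledge relation. -/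
def RK (a : Ag) (Γ Δ : CW owner) : Prop := ∀ ψ : Form Ag Atom, Form.K a ψ ∈ Γ.1 → ψ ∈ Δ.1

variable {a : Ag} {Γ Δ Θ : CW owner}

lemma RK.refl (Γ : CW owner) (a : Ag) : RK a Γ Γ := fun ψ h =>
  Γ.2.imp_closed (Γ.2.mem_of_EDLProv (.axTK a ψ)) h

lemma RK.trans (h1 : RK a Γ Δ) (h2 : RK a Δ Θ) : RK a Γ Θ := fun ψ h =>
  h2 ψ (h1 _ (Γ.2.imp_closed (Γ.2.mem_of_EDLProv (.ax4K a ψ)) h))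

lemma RK.symm (h : RK a Γ Δ) : RK a Δ Γ := by
  intro ψ hψ
  by_cases hk : Form.K a ψ ∈ Γ.1
  · exact Γ.2.imp_closed (Γ.2.mem_of_EDLProv (.axTK a ψ)) hk
  · exfalso
    have hn : Form.neg (Form.K a ψ) ∈ Γ.1 := Γ.2.neg_mem_iff.2 hk
    have h5 : Form.K a (Form.neg (Form.K a ψ)) ∈ Γ.1 :=
      Γ.2.imp_closed (Γ.2.mem_of_EDLProv (.ax5K a ψ)) hn
    exact (Δ.2.neg_mem_iff.1 (h _ h5)) hψ

lemma B_sub_RK (h : (canon owner).B a Γ Δ) : RK a Γ Δ := fun ψ hψ =>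
  h ψ (Γ.2.imp_closed (Γ.2.mem_of_EDLProv (.axKIB a ψ)) hψ)

lemma eqvgen_sub_RK (h : Relation.EqvGen ((canon owner).B a) Γ Δ) : RK a Γ Δ := by
  induction h with
  | rel x y hxy => exact B_sub_RK hxy
  | refl x => exact RK.refl x a
  | symm x y _ ih => exact ih.symm
  | trans x y z _ _ ih1 ih2 => exact ih1.trans ih2

lemma belief_iff_of_RK (h : RK a Γ Δ) (ψ : Form Ag Atom) :
    Form.B a ψ ∈ Γ.1 ↔ Form.B a ψ ∈ Δ.1 := by
  constructor
  · intro hb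
    exact h _ (Γ.2.imp_closed (Γ.2.mem_of_EDLProv (.axPI a ψ)) hb)
  · intro hb
    by_contra hb'
    have hn : Form.neg (Form.B a ψ) ∈ Γ.1 := Γ.2.neg_mem_iff.2 hb'
    have := h _ (Γ.2.imp_closed (Γ.2.mem_of_EDLProv (.axNI a ψ)) hn)
    exact (Δ.2.neg_mem_iff.1 this) hb

/-- Lifting provability from the belief set. -/
lemma provB_conj {M : List (Form Ag Atom)} (h : ∀ χ ∈ M, Form.B a χ ∈ Γ.1) :
    ProvFrom owner Γ.1 (Form.B a (conj M)) := by
  induction M with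
  | nil => exact .of_prov (.necB a (.taut taut_notbot))
  | cons χ rest ih =>
    cases rest with
    | nil => exact .of_mem (h χ (by simp))
    | cons χ' t =>
      exact ((ProvFrom.of_prov (.B_and a χ (conj (χ' :: t)))).mp'
        (.of_mem (h χ (by simp)))).mp' (ih (fun ψ hψ => h ψ (by simp [hψ])))

lemma provK_conj {M : List (Form Ag Atom)} (h : ∀ χ ∈ M, Form.K a χ ∈ Γ.1) :
    ProvFrom owner Γ.1 (Form.K a (conj M)) := by
  induction M with
  | nil => exact .of_prov (.nec a (.taut taut_notbot))
  | cons χ rest ih =>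
    cases rest with
    | nil => exact .of_mem (h χ (by simp))
    | cons χ' t =>
      exact ((ProvFrom.of_prov (.K_and a χ (conj (χ' :: t)))).mp'
        (.of_mem (h χ (by simp)))).mp' (ih (fun ψ hψ => h ψ (by simp [hψ])))

lemma liftB {ψ : Form Ag Atom} (h : ProvFrom owner {χ | Form.B a χ ∈ Γ.1} ψ) :
    ProvFrom owner Γ.1 (Form.B a ψ) := by
  obtain ⟨M, hM, p⟩ := h
  exact (ProvFrom.of_prov (.distB a p)).mp' (provB_conj hM)

lemma liftK {ψ : Form Ag Atom} (h : ProvFrom owner {χ | Form.K a χ ∈ Γ.1} ψ) :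
    ProvFrom owner Γ.1 (Form.K a ψ) := by
  obtain ⟨M, hM, p⟩ := h
  exact (ProvFrom.of_prov (.distK a p)).mp' (provK_conj hM)

lemma beliefs_consistent (Γ : CW owner) (a : Ag) :
    EDLConsistent owner {χ | Form.B a χ ∈ Γ.1} := by
  intro h
  have hb : ProvFrom owner Γ.1 (Form.B a Form.bot) := liftB h
  have hd : ProvFrom owner Γ.1 (Form.neg (Form.B a Form.bot)) :=
    .of_prov (.axDB a (Form.atom default))
  exact Γ.2.1 (((ProvFrom.of_prov
    (.taut (taut_contr (Form.B a Form.bot)))).mp' hb).mp' hd)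

lemma existsB {ψ : Form Ag Atom} (h : Form.B a ψ ∉ Γ.1) :
    ∃ Δ : CW owner, (canon owner).B a Γ Δ ∧ ψ ∉ Δ.1 := by
  have hcons : EDLConsistent owner (insert (Form.neg ψ) {χ | Form.B a χ ∈ Γ.1}) := by
    intro hc
    have h1 := deduction hc
    have h2 : ProvFrom owner {χ | Form.B a χ ∈ Γ.1} ψ :=
      (ProvFrom.of_prov (.taut (taut_negimp_bot_pos ψ))).mp' h1
    exact h (Γ.2.mem_of_prov (liftB h2))
  obtain ⟨Δ', hsub, hmax⟩ := lindenbaum hcons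
  refine ⟨⟨Δ', hmax⟩, fun χ hχ => hsub (Set.mem_insert_of_mem _ hχ), ?_⟩
  exact hmax.neg_mem_iff.1 (hsub (Set.mem_insert _ _))

lemma existsK {ψ : Form Ag Atom} (h : Form.K a ψ ∉ Γ.1) :
    ∃ Δ : CW owner, RK a Γ Δ ∧ ψ ∉ Δ.1 := by
  have hcons : EDLConsistent owner (insert (Form.neg ψ) {χ | Form.K a χ ∈ Γ.1}) := by
    intro hc
    have h1 := deduction hc
    have h2 : ProvFrom owner {χ | Form.K a χ ∈ Γ.1} ψ :=
      (ProvFrom.of_prov (.taut (taut_negimp_bot_pos ψ))).mp' h1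
    exact h (Γ.2.mem_of_prov (liftK h2))
  obtain ⟨Δ', hsub, hmax⟩ := lindenbaum hcons
  refine ⟨⟨Δ', hmax⟩, fun χ hχ => hsub (Set.mem_insert_of_mem _ hχ), ?_⟩
  exact hmax.neg_mem_iff.1 (hsub (Set.mem_insert _ _))

lemma canon_serial' (Γ : CW owner) (a : Ag) : ∃ Δ : CW owner, (canon owner).B a Γ Δ := by
  obtain ⟨Δ', hsub, hmax⟩ := lindenbaum (beliefs_consistent Γ a)
  exact ⟨⟨Δ', hmax⟩, fun χ hχ => hsub hχ⟩

lemma RK_sub_eqvgen (h : RK a Γ Δ) : Relation.EqvGen ((canon owner).B a) Γ Δ := by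
  obtain ⟨Θ', hsub, hmax⟩ := lindenbaum (beliefs_consistent Γ a)
  have h1 : (canon owner).B a Γ ⟨Θ', hmax⟩ := fun χ hχ => hsub hχ
  have h2 : (canon owner).B a Δ ⟨Θ', hmax⟩ := fun χ hχ =>
    hsub ((belief_iff_of_RK h χ).2 hχ)
  exact .trans _ _ _ (.rel _ _ h1) (.symm _ _ (.rel _ _ h2))

lemma atom_agree_of_B {p : Atom} (hp : owner p = a) (h : (canon owner).B a Γ Δ) :
    (Form.atom p ∈ Γ.1 ↔ Form.atom p ∈ Δ.1) := by
  have hloc := Γ.2.mem_of_EDLProv (.axLoc a p hp)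
  have h1 := (Γ.2.and_mem_iff.1 hloc).1
  have h2 := (Γ.2.and_mem_iff.1 hloc).2
  constructor
  · intro hin; exact h _ (Γ.2.imp_closed h1 hin)
  · intro hin; by_contra hno
    have := h _ (Γ.2.imp_closed h2 (Γ.2.neg_mem_iff.2 hno))
    exact (Δ.2.neg_mem_iff.1 this) hin

lemma atom_agree_of_eqvgen {p : Atom} (hp : owner p = a)
    (h : Relation.EqvGen ((canon owner).B a) Γ Δ) :
    (Form.atom p ∈ Γ.1 ↔ Form.atom p ∈ Δ.1) := by
  induction h with
  | rel x y hxy => exact atom_agree_of_B hp hxy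
  | refl x => exact Iff.rfl
  | symm x y _ ih => exact ih.symm
  | trans x y z _ _ ih1 ih2 => exact ih1.trans ih2

lemma canon_local : (canon owner).Local owner := by
  intro a Γ Δ h
  ext p
  simp only [Set.mem_inter_iff, Set.mem_setOf_eq]
  rcases h with h | h
  · exact ⟨fun ⟨h1, h2⟩ => ⟨(atom_agree_of_B h2 h).1 h1, h2⟩,
      fun ⟨h1, h2⟩ => ⟨(atom_agree_of_B h2 h).2 h1, h2⟩⟩
  · exact ⟨fun ⟨h1, h2⟩ => ⟨(atom_agree_of_B h2 h).2 h1, h2⟩,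
      fun ⟨h1, h2⟩ => ⟨(atom_agree_of_B h2 h).1 h1, h2⟩⟩

lemma canon_serial : (canon owner).Serial := fun a Γ => canon_serial' Γ a

lemma canon_transit : (canon owner).Transit := by
  intro a Γ Δ Θ h1 h2 ψ hψ
  exact h2 ψ (h1 _ (Γ.2.imp_closed (Γ.2.mem_of_EDLProv (.ax4B a ψ)) hψ))

lemma canon_eucl : (canon owner).Eucl := by
  intro a Γ Δ Θ h1 h2 ψ hψ
  by_cases hb : Form.B a ψ ∈ Γ.1
  · exact h2 ψ hb
  · exfalso
    have hn := Γ.2.imp_closed (Γ.2.mem_of_EDLProv (.ax5B a ψ)) (Γ.2.neg_mem_iff.2 hb)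
    exact (Δ.2.neg_mem_iff.1 (h1 _ hn)) hψ

lemma canon_proper : (canon owner).Proper := by
  intro Γ Δ hne
  by_contra hall
  push_neg at hall
  have hrk : ∀ a : Ag, RK a Γ Δ := fun a => eqvgen_sub_RK (hall a)
  have key : ∀ φ : Form Ag Atom, φ ∈ Γ.1 ↔ φ ∈ Δ.1 := by
    intro φ
    induction φ with
    | atom p => exact atom_agree_of_eqvgen rfl (hall (owner p))
    | neg ψ ih => rw [Γ.2.neg_mem_iff, Δ.2.neg_mem_iff, ih]
    | and ψ χ ih1 ih2 => rw [Γ.2.and_mem_iff, Δ.2.and_mem_iff, ih1, ih2]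
    | B a ψ _ => exact belief_iff_of_RK (hrk a) ψ
    | K a ψ _ =>
      constructor
      · intro h
        exact (hrk a) _ (Γ.2.imp_closed (Γ.2.mem_of_EDLProv (.ax4K a ψ)) h)
      · intro h
        exact (hrk a).symm _ (Δ.2.imp_closed (Δ.2.mem_of_EDLProv (.ax4K a ψ)) h)
  exact hne (Subtype.ext (Set.ext key))

/-- Truth lemma. -/
lemma truth_lemma : ∀ (φ : Form Ag Atom) (Γ : CW owner),
    ksat (canon owner) Γ φ ↔ φ ∈ Γ.1 := by
  intro φ
  induction φ with
  | atom p => intro Γ; simp [ksat, canon]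
  | neg ψ ih => intro Γ; simp only [ksat, ih Γ, Γ.2.neg_mem_iff]
  | and ψ χ ih1 ih2 => intro Γ; simp only [ksat, ih1 Γ, ih2 Γ, Γ.2.and_mem_iff]
  | B a ψ ih =>
    intro Γ
    constructor
    · intro h
      by_contra hb
      obtain ⟨Δ, hΔ, hψ⟩ := existsB hb
      exact hψ ((ih Δ).1 (h Δ hΔ))
    · intro h Δ hΔ
      exact (ih Δ).2 (hΔ ψ h)
  | K a ψ ih =>
    intro Γ
    constructor
    · intro h
      by_contra hk
      obtain ⟨Δ, hΔ, hψ⟩ := existsK hk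
      exact hψ ((ih Δ).1 (h Δ (RK_sub_eqvgen hΔ)))
    · intro h Δ hΔ
      exact (ih Δ).2 (eqvgen_sub_RK hΔ ψ h)

end Canonical

section Soundness
variable {Ag Atom W : Type} {owner : Atom → Ag}

lemma ksat_imp {M : KModel Ag Atom W} {w : W} {φ ψ : Form Ag Atom} :
    ksat M w (φ.imp ψ) ↔ (ksat M w φ → ksat M w ψ) := by
  simp only [Form.imp, Form.or, ksat]
  tauto

lemma succ_iff {M : KModel Ag Atom W} (ht : M.Transit) (he : M.Eucl) {a : Ag} {w u : W}
    (h : Relation.EqvGen (M.B a) w u) : ∀ v, M.B a w v ↔ M.B a u v := by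
  induction h with
  | rel x y hxy => exact fun v => ⟨fun h => he a x y v hxy h, fun h => ht a x y v hxy h⟩
  | refl x => exact fun v => Iff.rfl
  | symm x y _ ih => exact fun v => (ih v).symm
  | trans x y z _ _ ih1 ih2 => exact fun v => (ih1 v).trans (ih2 v)

lemma soundness {φ : Form Ag Atom} (h : EDLProv owner φ) (M : KModel Ag Atom W)
    (hloc : M.Local owner) (hser : M.Serial) (htr : M.Transit) (heu : M.Eucl) :
    ∀ w : W, ksat M w φ := by
  induction h with
  | @taut ψ ht =>
    intro w
    classical
    have key := ht (fun χ => decide (ksat M w χ))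
      (fun χ => by rw [Bool.eq_iff_iff, decide_eq_true_iff]; simp [ksat]) (fun χ₁ χ₂ => by rw [Bool.eq_iff_iff, decide_eq_true_iff]; simp [ksat])
    exact of_decide_eq_true key
  | axKB a ψ χ =>
    intro w
    rw [ksat_imp]; intro h1; rw [ksat_imp]; intro h2
    intro u hu
    exact ksat_imp.1 (h1 u hu) (h2 u hu)
  | axDB a ψ =>
    intro w hc
    obtain ⟨u, hu⟩ := hser a w
    have := hc u hu
    exact this.2 this.1
  | ax4B a ψ =>
    intro w
    rw [ksat_imp]; intro h1 u hu v hv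
    exact h1 v (htr a w u v hu hv)
  | ax5B a ψ =>
    intro w
    rw [ksat_imp]; intro h1 u hu hc
    exact h1 (fun v hv => hc v (heu a w u v hu hv))
  | axKK a ψ χ =>
    intro w
    rw [ksat_imp]; intro h1; rw [ksat_imp]; intro h2 u hu
    exact ksat_imp.1 (h1 u hu) (h2 u hu)
  | axTK a ψ =>
    intro w
    rw [ksat_imp]; intro h1
    exact h1 w (.refl w)
  | ax4K a ψ =>
    intro w
    rw [ksat_imp]; intro h1 u hu v hv
    exact h1 v (hu.trans _ _ _ hv)
  | ax5K a ψ =>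
    intro w
    rw [ksat_imp]; intro h1 u hu hc
    exact h1 (fun v hv => hc v ((hu.symm _ _).trans _ _ _ hv))
  | axPI a ψ =>
    intro w
    rw [ksat_imp]; intro h1 u hu v hv
    exact h1 v ((succ_iff htr heu hu v).2 hv)
  | axNI a ψ =>
    intro w
    rw [ksat_imp]; intro h1 u hu hc
    exact h1 (fun v hv => hc v ((succ_iff htr heu hu v).1 hv))
  | axKIB a ψ =>
    intro w
    rw [ksat_imp]; intro h1 u hu
    exact h1 u (.rel _ _ hu)
  | axLoc a p hp =>
    intro w
    refine ⟨ksat_imp.2 ?_, ksat_imp.2 ?_⟩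
    · intro h1 u hu
      have := hloc a w u (Or.inl hu)
      have hmem : p ∈ M.V w ∩ {q | owner q = a} := ⟨h1, hp⟩
      rw [this] at hmem
      exact hmem.1
    · intro h1 u hu h2
      have := hloc a w u (Or.inl hu)
      have hmem : p ∈ M.V u ∩ {q | owner q = a} := ⟨h2, hp⟩
      rw [← this] at hmem
      exact h1 hmem.1
  | mp _ _ ih1 ih2 =>
    intro w
    exact ksat_imp.1 (ih1 w) (ih2 w)
  | nec a _ ih =>
    intro w u _
    exact ih u

end Soundness

def formSomeAtom {Ag Atom : Type} : Form Ag Atom → Atom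
  | .atom p  => p
  | .neg φ   => formSomeAtom φ
  | .and φ _ => formSomeAtom φ
  | .B _ φ   => formSomeAtom φ
  | .K _ φ   => formSomeAtom φ

end DoxHG

namespace DoxHG

/-- EDL is sound and complete with respect to the class `K^{STE}_n`
of all local and proper doxastic Kripke models that are serial, transitive and
Euclidean. -/
theorem statement_3 {Ag Atom : Type} [Fintype Ag] [Nonempty Ag] [Countable Atom]
    (owner : Atom → Ag) (φ : Form Ag Atom) :
    EDLProv owner φ ↔
      ∀ (W : Type) (_ : Nonempty W) (M : KModel Ag Atom W),
        M.Local owner → M.Proper → M.Serial → M.Transit → M.Eucl →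
        ∀ w : W, ksat M w φ := by
  constructor
  · intro h W _ M hloc _ hser htr heu w
    exact soundness h M hloc hser htr heu w
  · intro h
    haveI : Inhabited Atom := ⟨formSomeAtom φ⟩
    by_contra hnp
    have hcons : EDLConsistent owner {Form.neg φ} := by
      intro hc
      have h1 : ProvFrom owner (∅ : Set (Form Ag Atom)) ((Form.neg φ).imp Form.bot) := by
        have : ({Form.neg φ} : Set (Form Ag Atom)) = insert (Form.neg φ) ∅ := by simp
        rw [this] at hc
        exact deduction hc
      obtain ⟨L, hL, p⟩ := h1
      have hLnil : L = [] := by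
        cases L with
        | nil => rfl
        | cons ψ t => exact absurd (hL ψ (by simp)) (by simp)
      rw [hLnil] at p
      have hprov : EDLProv owner ((Form.neg φ).imp Form.bot) :=
        .mp p (.taut taut_notbot)
      exact hnp (.mp (.taut (taut_negimp_bot_pos φ)) hprov)
    obtain ⟨Δ, hsub, hmax⟩ := lindenbaum hcons
    have hW : Nonempty (CW owner) := ⟨⟨Δ, hmax⟩⟩
    have := h (CW owner) hW (canon owner) canon_local canon_proper canon_serial
      canon_transit canon_eucl ⟨Δ, hmax⟩
    have hφ : φ ∈ Δ := (truth_lemma φ ⟨Δ, hmax⟩).1 this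
    exact (hmax.neg_mem_iff.1 (hsub rfl)) hφ

end DoxHG
end

section
/- Let (G, χ) be an n-uniform chromatic directed hypergraph (n = |Ag|) and let a be an agent. Then the doxastic accessibility relation B^G_a on the hyperedges of G is transitive and Euclidean; and if G is additionally tail-complete, then B^G_a is also serial. -/
namespace DoxHG

/-- In an `n`-uniform chromatic directed hypergraph (`n = |Ag|`),
the doxastic accessibility relation `B^G_a` on hyperedges is transitive and
Euclidean; if the hypergraph is moreover tail-complete, `B^G_a` is serial. -/
theorem statement_4 {Ag Atom V : Type} [Fintype Ag] [Nonempty Ag]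
    (M : HModel Ag Atom V) (hG : M.IsHypergraph) (hχ : M.IsChromatic)
    (hU : M.Uniform (Fintype.card Ag)) (a : Ag) :
    (∀ e₁ ∈ M.E, ∀ e₂ ∈ M.E, ∀ e₃ ∈ M.E,
        Bacc M a e₁ e₂ → Bacc M a e₂ e₃ → Bacc M a e₁ e₃) ∧
    (∀ e₁ ∈ M.E, ∀ e₂ ∈ M.E, ∀ e₃ ∈ M.E,
        Bacc M a e₁ e₂ → Bacc M a e₁ e₃ → Bacc M a e₂ e₃) ∧
    (M.TailComplete → ∀ e ∈ M.E, ∃ e' ∈ M.E, Bacc M a e e') := by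
  -- every hyperedge has exactly one vertex of each color
  have hsurj : ∀ e ∈ M.E, ∃ u ∈ ebar e, M.χ u = a := by
    intro e he
    have hfin : (ebar e).Finite := by
      obtain ⟨-, -, h1, h2, -⟩ := (hG.2 e he)
      exact h1.union h2
    have himg : (M.χ '' ebar e).ncard = Fintype.card Ag := by
      rw [Set.ncard_image_of_injOn (hχ e he), hU e he]
    have : M.χ '' ebar e = Set.univ := by
      apply Set.eq_of_subset_of_ncard_le (Set.subset_univ _)
      rw [Set.ncard_univ, himg, Nat.card_eq_fintype_card]
    have : a ∈ M.χ '' ebar e := this ▸ Set.mem_univ a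
    obtain ⟨u, hu, hau⟩ := this
    exact ⟨u, hu, hau⟩
  have huniq : ∀ e ∈ M.E, ∀ u v, u ∈ ebar e → v ∈ ebar e →
      M.χ u = a → M.χ v = a → u = v := by
    intro e he u v hu hv hau hav
    exact hχ e he hu hv (hau.trans hav.symm)
  refine ⟨?_, ?_, ?_⟩
  · rintro e₁ he₁ e₂ he₂ e₃ he₃ ⟨u, hau, hu1, hu2⟩ ⟨v, hav, hv2, hv3⟩
    have : u = v := huniq e₂ he₂ u v (Or.inl hu2) hv2 hau hav
    exact ⟨u, hau, hu1, this ▸ hv3⟩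
  · rintro e₁ he₁ e₂ he₂ e₃ he₃ ⟨u, hau, hu1, hu2⟩ ⟨v, hav, hv1, hv3⟩
    have : v = u := huniq e₁ he₁ v u hv1 hu1 hav hau
    exact ⟨u, hau, Or.inl hu2, this ▸ hv3⟩
  · intro hTC e he
    obtain ⟨u, hu, hau⟩ := hsurj e he
    have huV : u ∈ M.Vset := by
      obtain ⟨-, h⟩ := hG
      rcases hu with h1 | h2
      · exact (h e he).1 h1
      · exact (h e he).2.1 h2
    obtain ⟨e', he', hue'⟩ := hTC u huV
    exact ⟨e', he', u, hau, hu, hue'⟩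

end DoxHG
end

section
/- Let Γ and Δ be maximally EDL-consistent sets and let a be an agent. (i) If Γ^{B_a} ⊆ Δ, then s(Γ,a) = s(Δ,a). (ii) If Γ^{K_a} ⊆ Δ, then s(Γ,a) = s(Δ,a). -/
namespace DoxHG

section Canonical

variable {Ag Atom : Type}

/-- `Γ^{B_a} := {φ | B_aφ ∈ Γ}`. -/
def projB (Γ : Set (Form Ag Atom)) (a : Ag) : Set (Form Ag Atom) := {φ | Form.B a φ ∈ Γ}

/-- `Γ^{K_a} := {φ | K_aφ ∈ Γ}`. -/
def projK (Γ : Set (Form Ag Atom)) (a : Ag) : Set (Form Ag Atom) := {φ | Form.K a φ ∈ Γ}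

/-- `V_a(Γ) := Γ ∩ Var_a` (as a set of atomic formulas). -/
def Vform (owner : Atom → Ag) (Γ : Set (Form Ag Atom)) (a : Ag) : Set (Form Ag Atom) :=
  {ψ | ψ ∈ Γ ∧ ∃ p : Atom, owner p = a ∧ ψ = Form.atom p}

/-- `B̂_a(Γ) := {B_aφ | B_aφ ∈ Γ}`. -/
def Bhat (Γ : Set (Form Ag Atom)) (a : Ag) : Set (Form Ag Atom) :=
  {ψ | ψ ∈ Γ ∧ ∃ φ : Form Ag Atom, ψ = Form.B a φ}

/-- `s(Γ,a) := V_a(Γ) ∪ B̂_a(Γ)`. -/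
def sSet (owner : Atom → Ag) (Γ : Set (Form Ag Atom)) (a : Ag) : Set (Form Ag Atom) :=
  Vform owner Γ a ∪ Bhat Γ a

/-- The canonical vertex `s(Γ,a)`, tagged with its color `a`. -/
def cvert (owner : Atom → Ag) (Γ : Set (Form Ag Atom)) (a : Ag) :
    Ag × Set (Form Ag Atom) :=
  (a, sSet owner Γ a)

/-- `T(Γ) := {s(Γ,b) | b ∈ Ag, Γ^{B_b} ⊆ Γ}`. -/
def Tset (owner : Atom → Ag) (Γ : Set (Form Ag Atom)) : Set (Ag × Set (Form Ag Atom)) :=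
  {v | ∃ b : Ag, projB Γ b ⊆ Γ ∧ v = cvert owner Γ b}

/-- `H(Γ) := {s(Γ,b) | b ∈ Ag, Γ^{B_b} ⊄ Γ}`. -/
def Hset (owner : Atom → Ag) (Γ : Set (Form Ag Atom)) : Set (Ag × Set (Form Ag Atom)) :=
  {v | ∃ b : Ag, ¬ projB Γ b ⊆ Γ ∧ v = cvert owner Γ b}

/-- The canonical hyperedge `e_Γ = (T(Γ), H(Γ))`. -/
def cedge (owner : Atom → Ag) (Γ : Set (Form Ag Atom)) :
    Set (Ag × Set (Form Ag Atom)) × Set (Ag × Set (Form Ag Atom)) :=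
  (Tset owner Γ, Hset owner Γ)

/-- The canonical hypergraph model `M^c` for EDL. -/
def canonHM [Inhabited Atom] (owner : Atom → Ag) :
    HModel Ag Atom (Ag × Set (Form Ag Atom)) where
  Vset := {v | ∃ Γ : Set (Form Ag Atom), MaxEDLConsistent owner Γ ∧ ∃ a : Ag, v = cvert owner Γ a}
  E := {e | ∃ Γ : Set (Form Ag Atom), MaxEDLConsistent owner Γ ∧ e = cedge owner Γ}
  χ := Prod.fst
  ℓ := fun v => {p : Atom | Form.atom p ∈ v.2 ∧ owner p = v.1}

end Canonical

end DoxHG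

namespace DoxHG

section Aux

open Classical

variable {Ag Atom : Type} [Inhabited Atom] {owner : Atom → Ag}

lemma v_imp_iff {v : Form Ag Atom → Bool}
    (hn : ∀ ψ, v (.neg ψ) = !v ψ) (ha : ∀ ψ χ, v (.and ψ χ) = (v ψ && v χ))
    (φ ψ : Form Ag Atom) : v (φ.imp ψ) = true ↔ (v φ = true → v ψ = true) := by
  simp only [Form.imp, Form.or, hn, ha]
  cases h1 : v φ <;> cases h2 : v ψ <;> simp

lemma v_bot {v : Form Ag Atom → Bool}
    (hn : ∀ ψ, v (.neg ψ) = !v ψ) (ha : ∀ ψ χ, v (.and ψ χ) = (v ψ && v χ)) :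
    v (Form.bot : Form Ag Atom) = false := by
  simp [Form.bot, hn, ha]

lemma v_conj {v : Form Ag Atom → Bool}
    (hn : ∀ ψ, v (.neg ψ) = !v ψ) (ha : ∀ ψ χ, v (.and ψ χ) = (v ψ && v χ)) :
    ∀ L : List (Form Ag Atom), (v (conj L) = true ↔ ∀ ψ ∈ L, v ψ = true)
  | [] => by simp [conj, Form.bot, hn, ha]
  | [φ] => by simp [conj]
  | φ :: χ :: rest => by
      have ih := v_conj hn ha (χ :: rest)
      simp only [conj, ha]
      constructor
      · rintro h ψ hψ
        rcases (by simpa using h : v φ = true ∧ v (conj (χ :: rest)) = true) with ⟨h1, h2⟩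
        rcases List.mem_cons.mp hψ with rfl | hψ
        · exact h1
        · exact ih.mp h2 ψ hψ
      · intro h
        have h2 : v (conj (χ :: rest)) = true := ih.mpr (fun ψ hψ => h ψ (List.mem_cons_of_mem _ hψ))
        simp [h φ (by simp), h2]

lemma edl_thm_mem {Γ : Set (Form Ag Atom)} (hΓ : MaxEDLConsistent owner Γ)
    {φ : Form Ag Atom} (h : EDLProv owner φ) : ProvFrom owner Γ φ := by
  refine ⟨[], by simp, ?_⟩
  have T : Tautology (φ.imp ((conj ([] : List (Form Ag Atom))).imp φ)) := by
    intro v hn ha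
    rw [v_imp_iff hn ha]
    intro hφ
    rw [v_imp_iff hn ha]
    intro _; exact hφ
  exact EDLProv.mp (EDLProv.taut T) h

lemma mcs_mem_of_provFrom {Γ : Set (Form Ag Atom)} (hΓ : MaxEDLConsistent owner Γ)
    {φ : Form Ag Atom} (h : ProvFrom owner Γ φ) : φ ∈ Γ := by
  by_contra hφ
  have hsub : Γ ⊂ insert φ Γ := Set.ssubset_insert hφ
  have hinc := hΓ.2 _ hsub
  rw [EDLConsistent, not_not] at hinc
  obtain ⟨L, hL, hLp⟩ := hinc
  obtain ⟨M, hM, hMp⟩ := h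
  set N := M ++ L.filter (fun ψ => decide (ψ ≠ φ)) with hN
  refine hΓ.1 ⟨N, ?_, ?_⟩
  · intro ψ hψ
    rcases List.mem_append.mp hψ with h' | h'
    · exact hM ψ h'
    · have h2 := List.mem_filter.mp h'
      rcases hL ψ h2.1 with h3 | h3
      · exact absurd h3 (by simpa using h2.2)
      · exact h3
  · have T : Tautology (((conj M).imp φ).imp
        (((conj L).imp Form.bot).imp ((conj N).imp Form.bot))) := by
      intro v hn ha
      rw [v_imp_iff hn ha]; intro hX
      rw [v_imp_iff hn ha]; intro hY
      rw [v_imp_iff hn ha]; intro hNv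
      rw [v_imp_iff hn ha] at hX hY
      rw [v_conj hn ha] at hNv
      have hMv : v (conj M) = true := (v_conj hn ha M).mpr
        (fun ψ hψ => hNv ψ (List.mem_append_left _ hψ))
      have hφv := hX hMv
      have hLv : v (conj L) = true := by
        rw [v_conj hn ha]
        intro ψ hψ
        by_cases he : ψ = φ
        · subst he; exact hφv
        · exact hNv ψ (List.mem_append_right _ (List.mem_filter.mpr ⟨hψ, by simpa using he⟩))
      exact hY hLv
    exact EDLProv.mp (EDLProv.mp (EDLProv.taut T) hMp) hLp

lemma mcs_thm_mem {Γ : Set (Form Ag Atom)} (hΓ : MaxEDLConsistent owner Γ)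
    {φ : Form Ag Atom} (h : EDLProv owner φ) : φ ∈ Γ :=
  mcs_mem_of_provFrom hΓ (edl_thm_mem hΓ h)

lemma mcs_mp_theorem {Γ : Set (Form Ag Atom)} (hΓ : MaxEDLConsistent owner Γ)
    {φ ψ : Form Ag Atom} (hφ : φ ∈ Γ) (h : EDLProv owner (φ.imp ψ)) : ψ ∈ Γ := by
  refine mcs_mem_of_provFrom hΓ ⟨[φ], by simpa using hφ, ?_⟩
  show EDLProv owner ((conj [φ]).imp ψ)
  exact h

lemma mcs_not_both {Γ : Set (Form Ag Atom)} (hΓ : MaxEDLConsistent owner Γ)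
    {φ : Form Ag Atom} (h1 : φ ∈ Γ) (h2 : Form.neg φ ∈ Γ) : False := by
  refine hΓ.1 ⟨[φ, Form.neg φ], ?_, EDLProv.taut ?_⟩
  · intro χ hχ
    simp only [List.mem_cons, List.not_mem_nil, or_false] at hχ
    rcases hχ with rfl | rfl <;> assumption
  · intro v hn ha
    rw [v_imp_iff hn ha]
    intro h
    rw [v_conj hn ha] at h
    have hφ := h φ (by simp)
    have hnφ := h (Form.neg φ) (by simp)
    rw [hn, hφ] at hnφ
    simp at hnφ

lemma mcs_neg_mem {Γ : Set (Form Ag Atom)} (hΓ : MaxEDLConsistent owner Γ)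
    {φ : Form Ag Atom} (h : φ ∉ Γ) : Form.neg φ ∈ Γ := by
  have hsub : Γ ⊂ insert φ Γ := Set.ssubset_insert h
  have hinc := hΓ.2 _ hsub
  rw [EDLConsistent, not_not] at hinc
  obtain ⟨L, hL, hLp⟩ := hinc
  set M := L.filter (fun ψ => decide (ψ ≠ φ)) with hM
  refine mcs_mem_of_provFrom hΓ ⟨M, ?_, ?_⟩
  · intro ψ hψ
    have h2 := List.mem_filter.mp hψ
    rcases hL ψ h2.1 with h3 | h3
    · exact absurd h3 (by simpa using h2.2)
    · exact h3
  · have T : Tautology (((conj L).imp Form.bot).imp ((conj M).imp (Form.neg φ))) := by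
      intro v hn ha
      rw [v_imp_iff hn ha]; intro hY
      rw [v_imp_iff hn ha]; intro hMv
      rw [v_imp_iff hn ha] at hY
      rw [v_conj hn ha] at hMv
      rw [hn]
      cases hv : v φ
      · simp
      · exfalso
        have hLv : v (conj L) = true := by
          rw [v_conj hn ha]
          intro ψ hψ
          by_cases he : ψ = φ
          · subst he; exact hv
          · exact hMv ψ (List.mem_filter.mpr ⟨hψ, by simpa using he⟩)
        have := hY hLv
        rw [v_bot hn ha] at this
        exact Bool.false_ne_true this
    exact EDLProv.mp (EDLProv.taut T) hLp

lemma mcs_mp_mem {Γ : Set (Form Ag Atom)} (hΓ : MaxEDLConsistent owner Γ)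
    {φ ψ : Form Ag Atom} (h1 : φ ∈ Γ) (h2 : φ.imp ψ ∈ Γ) : ψ ∈ Γ := by
  refine mcs_mem_of_provFrom hΓ ⟨[φ, φ.imp ψ], ?_, EDLProv.taut ?_⟩
  · intro χ hχ
    simp only [List.mem_cons, List.not_mem_nil, or_false] at hχ
    rcases hχ with rfl | rfl <;> assumption
  · intro v hn ha
    rw [v_imp_iff hn ha]
    intro h
    rw [v_conj hn ha] at h
    have hφ := h φ (by simp)
    have himp := h (φ.imp ψ) (by simp)
    rw [v_imp_iff hn ha] at himp
    exact himp hφ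

lemma edl_imp_trans {A B C : Form Ag Atom}
    (h1 : EDLProv owner (A.imp B)) (h2 : EDLProv owner (B.imp C)) :
    EDLProv owner (A.imp C) := by
  have T : Tautology ((A.imp B).imp ((B.imp C).imp (A.imp C))) := by
    intro v hn ha
    simp only [v_imp_iff hn ha]
    intro hab hbc hA; exact hbc (hab hA)
  exact EDLProv.mp (EDLProv.mp (EDLProv.taut T) h1) h2

lemma Bool.and_eq_true' {x y : Bool} : (x && y) = true ↔ x = true ∧ y = true := by
  cases x <;> cases y <;> simp

lemma edl_loc1 {a : Ag} {p : Atom} (h : owner p = a) :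
    EDLProv owner ((Form.atom p : Form Ag Atom).imp (Form.B a (Form.atom p))) := by
  have T : Tautology ((Form.and ((Form.atom p : Form Ag Atom).imp (Form.B a (Form.atom p)))
      ((Form.neg (Form.atom p)).imp (Form.B a (Form.neg (Form.atom p))))).imp
      ((Form.atom p).imp (Form.B a (Form.atom p)))) := by
    intro v hn ha
    rw [v_imp_iff hn ha]
    intro hand
    rw [ha] at hand
    exact (Bool.and_eq_true'.mp hand).1
  exact EDLProv.mp (EDLProv.taut T) (EDLProv.axLoc a p h)

lemma edl_loc2 {a : Ag} {p : Atom} (h : owner p = a) :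
    EDLProv owner ((Form.neg (Form.atom p) : Form Ag Atom).imp
      (Form.B a (Form.neg (Form.atom p)))) := by
  have T : Tautology ((Form.and ((Form.atom p : Form Ag Atom).imp (Form.B a (Form.atom p)))
      ((Form.neg (Form.atom p)).imp (Form.B a (Form.neg (Form.atom p))))).imp
      ((Form.neg (Form.atom p)).imp (Form.B a (Form.neg (Form.atom p))))) := by
    intro v hn ha
    rw [v_imp_iff hn ha]
    intro hand
    rw [ha] at hand
    exact (Bool.and_eq_true'.mp hand).2
  exact EDLProv.mp (EDLProv.taut T) (EDLProv.axLoc a p h)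

/-- From `B_a φ ∈ Δ` and `B_a ¬φ ∈ Δ` for an MCS `Δ`, derive a contradiction via D_B. -/
lemma mcs_DB_contra {Δ : Set (Form Ag Atom)} (hΔ : MaxEDLConsistent owner Δ)
    {a : Ag} {φ : Form Ag Atom}
    (h1 : Form.B a φ ∈ Δ) (h2 : Form.B a (Form.neg φ) ∈ Δ) : False := by
  set X : Form Ag Atom := (Form.neg φ).imp (Form.and φ (Form.neg φ)) with hX
  have T1 : Tautology (φ.imp X) := by
    intro v hn ha
    simp only [hX, v_imp_iff hn ha]
    intro hφ hnφ
    rw [ha]; exact Bool.and_eq_true'.mpr ⟨hφ, hnφ⟩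
  have hBimp : EDLProv owner (Form.B a (φ.imp X)) :=
    EDLProv.mp (EDLProv.axKIB a _) (EDLProv.nec a (EDLProv.taut T1))
  have h3 : Form.B a X ∈ Δ :=
    mcs_mp_theorem hΔ h1 (EDLProv.mp (EDLProv.axKB a φ X) hBimp)
  have h4 : (Form.B a (Form.neg φ)).imp (Form.B a (Form.and φ (Form.neg φ))) ∈ Δ :=
    mcs_mp_theorem hΔ h3 (EDLProv.axKB a (Form.neg φ) (Form.and φ (Form.neg φ)))
  have h5 : Form.B a (Form.and φ (Form.neg φ)) ∈ Δ := mcs_mp_mem hΔ h2 h4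
  have h6 : Form.neg (Form.B a (Form.and φ (Form.neg φ))) ∈ Δ :=
    mcs_thm_mem hΔ (EDLProv.axDB a φ)
  exact mcs_not_both hΔ h5 h6

end Aux

/-- For maximally EDL-consistent sets Γ, Δ and an agent `a`:
(i) if `Γ^{B_a} ⊆ Δ` then `s(Γ,a) = s(Δ,a)`;
(ii) if `Γ^{K_a} ⊆ Δ` then `s(Γ,a) = s(Δ,a)`. -/
theorem statement_8 {Ag Atom : Type} [Fintype Ag] [Nonempty Ag] [Countable Atom] [Inhabited Atom]
    (owner : Atom → Ag) (Γ Δ : Set (Form Ag Atom))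
    (hΓ : MaxEDLConsistent owner Γ) (hΔ : MaxEDLConsistent owner Δ) (a : Ag) :
    (projB Γ a ⊆ Δ → sSet owner Γ a = sSet owner Δ a) ∧
    (projK Γ a ⊆ Δ → sSet owner Γ a = sSet owner Δ a) := by
  constructor
  · intro hB
    ext ψ
    simp only [sSet, Vform, Bhat, Set.mem_union, Set.mem_setOf_eq]
    constructor
    · rintro (⟨hmem, p, hp, rfl⟩ | ⟨hmem, φ, rfl⟩)
      · have hBp : Form.B a (Form.atom p) ∈ Γ := mcs_mp_theorem hΓ hmem (edl_loc1 hp)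
        exact Or.inl ⟨hB hBp, p, hp, rfl⟩
      · have hBB : Form.B a (Form.B a φ) ∈ Γ := mcs_mp_theorem hΓ hmem (EDLProv.ax4B a φ)
        exact Or.inr ⟨hB hBB, φ, rfl⟩
    · rintro (⟨hmem, p, hp, rfl⟩ | ⟨hmem, φ, rfl⟩)
      · refine Or.inl ⟨?_, p, hp, rfl⟩
        by_contra hnp
        have h1 := mcs_neg_mem hΓ hnp
        have h2 : Form.B a (Form.neg (Form.atom p)) ∈ Γ := mcs_mp_theorem hΓ h1 (edl_loc2 hp)
        exact mcs_not_both hΔ hmem (hB h2)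
      · refine Or.inr ⟨?_, φ, rfl⟩
        by_contra hnB
        have h1 := mcs_neg_mem hΓ hnB
        have h2 : Form.B a (Form.neg (Form.B a φ)) ∈ Γ := mcs_mp_theorem hΓ h1 (EDLProv.ax5B a φ)
        exact mcs_not_both hΔ hmem (hB h2)
  · intro hK
    ext ψ
    simp only [sSet, Vform, Bhat, Set.mem_union, Set.mem_setOf_eq]
    constructor
    · rintro (⟨hmem, p, hp, rfl⟩ | ⟨hmem, φ, rfl⟩)
      · have hBp : Form.B a (Form.atom p) ∈ Γ := mcs_mp_theorem hΓ hmem (edl_loc1 hp)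
        have hKBp : Form.K a (Form.B a (Form.atom p)) ∈ Γ :=
          mcs_mp_theorem hΓ hBp (EDLProv.axPI a (Form.atom p))
        have hBpΔ : Form.B a (Form.atom p) ∈ Δ := hK hKBp
        refine Or.inl ⟨?_, p, hp, rfl⟩
        by_contra hnp
        have h1 := mcs_neg_mem hΔ hnp
        have h2 : Form.B a (Form.neg (Form.atom p)) ∈ Δ := mcs_mp_theorem hΔ h1 (edl_loc2 hp)
        exact mcs_DB_contra hΔ hBpΔ h2
      · have hKB : Form.K a (Form.B a φ) ∈ Γ := mcs_mp_theorem hΓ hmem (EDLProv.axPI a φ)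
        exact Or.inr ⟨hK hKB, φ, rfl⟩
    · rintro (⟨hmem, p, hp, rfl⟩ | ⟨hmem, φ, rfl⟩)
      · refine Or.inl ⟨?_, p, hp, rfl⟩
        by_contra hnp
        have h1 := mcs_neg_mem hΓ hnp
        have h2 : Form.B a (Form.neg (Form.atom p)) ∈ Γ := mcs_mp_theorem hΓ h1 (edl_loc2 hp)
        have h3 : Form.K a (Form.B a (Form.neg (Form.atom p))) ∈ Γ :=
          mcs_mp_theorem hΓ h2 (EDLProv.axPI a _)
        have h4 : Form.B a (Form.neg (Form.atom p)) ∈ Δ := hK h3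
        have h5 : Form.B a (Form.atom p) ∈ Δ := mcs_mp_theorem hΔ hmem (edl_loc1 hp)
        exact mcs_DB_contra hΔ h5 h4
      · refine Or.inr ⟨?_, φ, rfl⟩
        by_contra hnB
        have h1 := mcs_neg_mem hΓ hnB
        have h2 : Form.K a (Form.neg (Form.B a φ)) ∈ Γ := mcs_mp_theorem hΓ h1 (EDLProv.axNI a φ)
        exact mcs_not_both hΔ hmem (hK h2)

end DoxHG
end
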